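/- arXiv:2404.06706 — 2 statements merged into one kernel-verified Lean document; each statement's English description precedes it below -/
import Mathlib

section
/- With H₁₁ = (P⁻¹ + Oᵀ(R + Γ Q Γᵀ)⁻¹ O)⁻¹ and H₁₂ = -H₁₁ Oᵀ R⁻¹ Γ (Q⁻¹ + Γᵀ R⁻¹ Γ)⁻¹, the identity H₁₁ Oᵀ R⁻¹ O + H₁₂ Γᵀ R⁻¹ O + H₁₁ P⁻¹ = I holds. -/
open Matrix

theorem H_identity {n m p : ℕ}
    (P : Matrix (Fin n) (Fin n) ℝ) (Q : Matrix (Fin m) (Fin m) ℝ)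
    (R : Matrix (Fin p) (Fin p) ℝ)
    (O : Matrix (Fin p) (Fin n) ℝ) (Γ : Matrix (Fin p) (Fin m) ℝ)
    (hP : P.PosDef) (hQ : Q.PosDef) (hR : R.PosDef)
    (H11 : Matrix (Fin n) (Fin n) ℝ) (H12 : Matrix (Fin n) (Fin m) ℝ)
    (hH11 : H11 = (P⁻¹ + Oᵀ * (R + Γ * Q * Γᵀ)⁻¹ * O)⁻¹)
    (hH12 : H12 = -(H11 * Oᵀ * R⁻¹ * Γ * (Q⁻¹ + Γᵀ * R⁻¹ * Γ)⁻¹)) :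
    H11 * Oᵀ * R⁻¹ * O + H12 * Γᵀ * R⁻¹ * O + H11 * P⁻¹ = 1 := by
  have hT : ∀ {a b : ℕ} (A : Matrix (Fin a) (Fin b) ℝ), Aᵀ = Aᴴ := fun A =>
    (conjTranspose_eq_transpose_of_trivial A).symm
  -- positive definiteness of auxiliary matrices
  have hM : (Q⁻¹ + Γᵀ * R⁻¹ * Γ).PosDef := by
    rw [hT Γ]
    exact hQ.inv.add_posSemidef (hR.inv.posSemidef.conjTranspose_mul_mul_same Γ)
  have hS : (R + Γ * Q * Γᵀ).PosDef := by
    rw [hT Γ]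
    exact hR.add_posSemidef (hQ.posSemidef.mul_mul_conjTranspose_same Γ)
  have hK : (P⁻¹ + Oᵀ * (R + Γ * Q * Γᵀ)⁻¹ * O).PosDef := by
    rw [hT O]
    exact hP.inv.add_posSemidef (hS.inv.posSemidef.conjTranspose_mul_mul_same O)
  -- Woodbury identity
  have hW : (R + Γ * Q * Γᵀ)⁻¹ =
      R⁻¹ - R⁻¹ * Γ * (Q⁻¹ + Γᵀ * R⁻¹ * Γ)⁻¹ * Γᵀ * R⁻¹ :=
    Matrix.add_mul_mul_inv_eq_sub R Γ Q Γᵀ hR.isUnit hQ.isUnit hM.isUnit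
  have hKinv : H11 * (P⁻¹ + Oᵀ * (R + Γ * Q * Γᵀ)⁻¹ * O) = 1 := by
    rw [hH11]
    exact Matrix.nonsing_inv_mul _ (hK.isUnit.map (detMonoidHom))
  calc H11 * Oᵀ * R⁻¹ * O + H12 * Γᵀ * R⁻¹ * O + H11 * P⁻¹
      = H11 * (P⁻¹ + Oᵀ * (R + Γ * Q * Γᵀ)⁻¹ * O) := by
        rw [hH12, hW]
        simp only [Matrix.mul_add, Matrix.add_mul, Matrix.sub_mul, Matrix.mul_sub,
          Matrix.neg_mul, Matrix.mul_assoc]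
        abel
    _ = 1 := hKinv
end

section
/- Let R and Q be symmetric positive definite matrices, O a p×n matrix, Γ a p×m matrix. For all e ∈ ℝⁿ and w ∈ ℝᵐ, (1/2)‖O e − Γ w‖²_{R⁻¹} + ‖w‖²_{Q⁻¹} ≥ (1/2) eᵀ G e, where G = Oᵀ(R⁻¹ − R⁻¹Γ(ΓᵀR⁻¹Γ + 2Q⁻¹)⁻¹ΓᵀR⁻¹)O = Oᵀ(R + (1/2)ΓQΓᵀ)⁻¹O. -/
open Matrix

private lemma dotT {i j : ℕ} (A : Matrix (Fin i) (Fin j) ℝ) (u : Fin i → ℝ) (v : Fin j → ℝ) :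
    u ⬝ᵥ A *ᵥ v = Aᵀ *ᵥ u ⬝ᵥ v := by
  rw [dotProduct_mulVec, mulVec_transpose]

private lemma symmDot {k : ℕ} {A : Matrix (Fin k) (Fin k) ℝ} (hA : Aᵀ = A)
    (u v : Fin k → ℝ) : u ⬝ᵥ A *ᵥ v = v ⬝ᵥ A *ᵥ u := by
  rw [dotT, hA, dotProduct_comm]

private lemma smulPD {k : ℕ} {c : ℝ} (hc : 0 < c) {A : Matrix (Fin k) (Fin k) ℝ}
    (hA : A.PosDef) : (c • A).PosDef := by
  refine ⟨?_, fun x hx => ?_⟩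
  · have := hA.isHermitian
    unfold Matrix.IsHermitian at *
    rw [conjTranspose_smul, this]
    simp
  · refine (Matrix.PosDef.of_dotProduct_mulVec_pos (M := c • A)
      (by rw [IsHermitian, conjTranspose_smul, hA.1.eq, star_trivial]) fun y hy => ?_).2 hx
    rw [star_trivial, smul_mulVec, dotProduct_smul, smul_eq_mul]
    exact mul_pos hc (by simpa using hA.dotProduct_mulVec_pos hy)

theorem disturbance_lower_bound {n m p : ℕ}
    (R : Matrix (Fin p) (Fin p) ℝ) (Q : Matrix (Fin m) (Fin m) ℝ)
    (O : Matrix (Fin p) (Fin n) ℝ) (Γ : Matrix (Fin p) (Fin m) ℝ)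
    (hR : R.PosDef) (hQ : Q.PosDef)
    (G : Matrix (Fin n) (Fin n) ℝ)
    (hG : G = Oᵀ * (R + (1 / 2 : ℝ) • (Γ * Q * Γᵀ))⁻¹ * O) :
    G = Oᵀ * (R⁻¹ - R⁻¹ * Γ * (Γᵀ * R⁻¹ * Γ + (2 : ℝ) • Q⁻¹)⁻¹ * Γᵀ * R⁻¹) * O ∧
    ∀ (e : Fin n → ℝ) (w : Fin m → ℝ),
      (1 / 2) * ((O *ᵥ e - Γ *ᵥ w) ⬝ᵥ R⁻¹ *ᵥ (O *ᵥ e - Γ *ᵥ w)) + w ⬝ᵥ Q⁻¹ *ᵥ w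
        ≥ (1 / 2) * (e ⬝ᵥ G *ᵥ e) := by
  have hRi : R⁻¹.PosDef := hR.inv
  have hQi : Q⁻¹.PosDef := hQ.inv
  have hRiT : R⁻¹ᵀ = R⁻¹ := hRi.isHermitian.eq
  have hQdet : IsUnit Q.det := isUnit_iff_ne_zero.mpr hQ.det_pos.ne'
  set M : Matrix (Fin m) (Fin m) ℝ := Γᵀ * R⁻¹ * Γ + (2 : ℝ) • Q⁻¹ with hMdef
  have hMpd : M.PosDef := by
    refine Matrix.PosDef.posSemidef_add ?_ (smulPD two_pos hQi)
    have := hRi.posSemidef.conjTranspose_mul_mul_same Γ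
    simpa using this
  have hMT : Mᵀ = M := hMpd.isHermitian.eq
  have hMunit : IsUnit M :=
    (Matrix.isUnit_iff_isUnit_det M).mpr (isUnit_iff_ne_zero.mpr hMpd.det_pos.ne')
  have hRunit : IsUnit R :=
    (Matrix.isUnit_iff_isUnit_det R).mpr (isUnit_iff_ne_zero.mpr hR.det_pos.ne')
  have hCpd : ((1 / 2 : ℝ) • Q).PosDef := smulPD (by norm_num) hQ
  have hCunit : IsUnit ((1 / 2 : ℝ) • Q) :=
    (Matrix.isUnit_iff_isUnit_det _).mpr (isUnit_iff_ne_zero.mpr hCpd.det_pos.ne')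
  have hCinv : ((1 / 2 : ℝ) • Q)⁻¹ = (2 : ℝ) • Q⁻¹ := by
    have h : ((1 / 2 : ℝ) • Q) * ((2 : ℝ) • Q⁻¹) = 1 := by
      rw [smul_mul_assoc, mul_smul_comm, smul_smul, Matrix.mul_nonsing_inv _ hQdet]
      norm_num
    exact inv_eq_right_inv h
  have hW : (R + (1 / 2 : ℝ) • (Γ * Q * Γᵀ))⁻¹
      = R⁻¹ - R⁻¹ * Γ * M⁻¹ * Γᵀ * R⁻¹ := by
    have hrw : (1 / 2 : ℝ) • (Γ * Q * Γᵀ) = Γ * ((1 / 2 : ℝ) • Q) * Γᵀ := by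
      simp only [Matrix.smul_mul, Matrix.mul_smul]
    rw [hrw]
    have hAC : IsUnit (((1 / 2 : ℝ) • Q)⁻¹ + Γᵀ * R⁻¹ * Γ) := by
      rw [hCinv, add_comm]; exact hMunit
    have := Matrix.add_mul_mul_inv_eq_sub R Γ ((1 / 2 : ℝ) • Q) Γᵀ hRunit hCunit hAC
    rw [this, hCinv, add_comm ((2 : ℝ) • Q⁻¹)]
  have hG2 : G = Oᵀ * (R⁻¹ - R⁻¹ * Γ * M⁻¹ * Γᵀ * R⁻¹) * O := by rw [hG, hW]
  refine ⟨hG2, fun e w => ?_⟩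
  set a : Fin p → ℝ := O *ᵥ e with ha
  set b : Fin m → ℝ := Γᵀ *ᵥ (R⁻¹ *ᵥ a) with hb
  set z : Fin m → ℝ := M⁻¹ *ᵥ b with hz
  have hMz : M *ᵥ z = b := by
    rw [hz, mulVec_mulVec, Matrix.mul_nonsing_inv _ ((Matrix.isUnit_iff_isUnit_det M).mp hMunit), one_mulVec]
  have hMiT : M⁻¹ᵀ = M⁻¹ := hMpd.inv.isHermitian.eq
  have hGw : ∀ u : Fin m → ℝ, a ⬝ᵥ R⁻¹ *ᵥ (Γ *ᵥ u) = b ⬝ᵥ u := by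
    intro u
    rw [dotT R⁻¹ a (Γ *ᵥ u), hRiT, dotT Γ (R⁻¹ *ᵥ a) u, ← hb]
  -- RHS computation
  have hRHS : e ⬝ᵥ G *ᵥ e = a ⬝ᵥ R⁻¹ *ᵥ a - b ⬝ᵥ M⁻¹ *ᵥ b := by
    rw [hG2]
    simp only [← mulVec_mulVec]
    rw [dotT Oᵀ, transpose_transpose, ← ha, sub_mulVec, dotProduct_sub]
    congr 1
    have h2 : (R⁻¹ * Γ * M⁻¹ * Γᵀ * R⁻¹) *ᵥ a = R⁻¹ *ᵥ (Γ *ᵥ (M⁻¹ *ᵥ b)) := by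
      simp only [← mulVec_mulVec, hb]
    rw [h2, hGw]
  have hGG : w ⬝ᵥ (Γᵀ * R⁻¹ * Γ) *ᵥ w = (Γ *ᵥ w) ⬝ᵥ R⁻¹ *ᵥ (Γ *ᵥ w) := by
    simp only [← mulVec_mulVec]
    rw [dotT Γᵀ, transpose_transpose]
  have hMw : w ⬝ᵥ M *ᵥ w = w ⬝ᵥ (Γᵀ * R⁻¹ * Γ) *ᵥ w + 2 * (w ⬝ᵥ Q⁻¹ *ᵥ w) := by
    rw [hMdef, add_mulVec, dotProduct_add, smul_mulVec, dotProduct_smul]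
    norm_num
  have hyMy : (w - z) ⬝ᵥ M *ᵥ (w - z)
      = w ⬝ᵥ M *ᵥ w - 2 * (w ⬝ᵥ b) + b ⬝ᵥ M⁻¹ *ᵥ b := by
    rw [sub_dotProduct, mulVec_sub, dotProduct_sub, dotProduct_sub, hMz]
    have h3 : z ⬝ᵥ M *ᵥ w = w ⬝ᵥ b := by rw [symmDot hMT, hMz]
    have h4 : z ⬝ᵥ b = b ⬝ᵥ M⁻¹ *ᵥ b := by rw [hz, dotProduct_comm]
    rw [h3, h4]; ring
  have hquad : (a - Γ *ᵥ w) ⬝ᵥ R⁻¹ *ᵥ (a - Γ *ᵥ w)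
      = a ⬝ᵥ R⁻¹ *ᵥ a - 2 * (w ⬝ᵥ b) + w ⬝ᵥ (Γᵀ * R⁻¹ * Γ) *ᵥ w := by
    rw [sub_dotProduct, mulVec_sub, dotProduct_sub, dotProduct_sub, hGG]
    have h5 : a ⬝ᵥ R⁻¹ *ᵥ (Γ *ᵥ w) = w ⬝ᵥ b := by rw [hGw, dotProduct_comm]
    have h6 : (Γ *ᵥ w) ⬝ᵥ R⁻¹ *ᵥ a = w ⬝ᵥ b := by rw [symmDot hRiT, h5]
    rw [h5, h6]; ring
  have hpos : 0 ≤ (w - z) ⬝ᵥ M *ᵥ (w - z) := by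
    have := hMpd.posSemidef.dotProduct_mulVec_nonneg (w - z)
    simpa using this
  rw [ge_iff_le, hRHS]
  rw [hyMy, hMw] at hpos
  linarith [hpos, hquad]
end
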